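/- arXiv:0712.3977 — 4 statements merged into one kernel-verified Lean document; each statement's English description precedes it below -/
import Mathlib

section
/- Abstract additive Schwarz bound (Dryja–Widlund): Let X be a finite-dimensional real vector space with SPD bilinear form a and operator A : X → X' defined by a(u,v) = ⟨Au, v⟩. Suppose X = X₁ + ... + X_M, b_k is an SPD bilinear form on X_k, and the preconditioner B : X' → X sends r to u = Σ u_k where each u_k ∈ X_k solves b_k(u_k, y_k) = ⟨r, y_k⟩ for all y_k ∈ X_k. If (i) every u ∈ X admits a decomposition u = Σ u_k with Σ ‖u_k‖_{b_k}² ≤ C₀‖u‖_a², (ii) ‖u_k‖_a² ≤ ω‖u_k‖_{b_k}² for all u_k ∈ X_k, and (iii) a(u_i, u_j) ≤ e_{ij}‖u_i‖_a‖u_j‖_a for all u_i ∈ X_i, u_j ∈ X_j with E = (e_{ij}) symmetric, then all eigenvalues of BA are real positive and λ_max(BA)/λ_min(BA) ≤ C₀ ω ρ(E), where ρ(E) is the spectral radius of E. -/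
open Matrix

/-!
For an eigenpair `B (A x) = μ • x`, the local solutions `t k = usol (A x) k` satisfy
`b k (t k) y = a x y` on `Xk k` and sum to `μ • x`, so `∑ k, b k (t k) (t k) = μ * a x x`.
Testing against a stable decomposition `x = ∑ k, u k` and applying Cauchy–Schwarz to the form
`∑ k, b k` on families gives `(a x x)² ≤ μ * a x x * (C₀ * a x x)`, i.e. `1 ≤ C₀ * μ`.
Conversely `μ² * a x x = a (∑ t) (∑ t) ≤ ρ * ∑ k, a (t k) (t k) ≤ ρ * ω * μ * a x x`, where the
first inequality is the Rayleigh bound for `E` applied to the vector `k ↦ √(a (t k) (t k))`;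
hence `μ ≤ ω * ρ`.
-/

theorem Matrix.IsSymm.dotProduct_mulVec_le {n : Type*} [Fintype n] [DecidableEq n]
    {E : Matrix n n ℝ} (hE : E.IsSymm) {ρ : ℝ}
    (hρ : ∀ μ, Module.End.HasEigenvalue (Matrix.toLin' E) μ → μ ≤ ρ) (v : n → ℝ) :
    v ⬝ᵥ (E *ᵥ v) ≤ ρ * (v ⬝ᵥ v) := by
  have hH : (algebraMap ℝ _ ρ - E).IsHermitian :=
    (isHermitian_diagonal _).sub (isHermitian_iff_isSymm.mpr hE)
  -- the eigenvalues of `ρ - E` are `ρ - μ` for the eigenvalues `μ` of `E`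
  have hpsd : (algebraMap ℝ _ ρ - E).PosSemidef := by
    rw [hH.posSemidef_iff_eigenvalues_nonneg]
    intro i
    have h := hH.eigenvalues_mem_spectrum_real i
    rw [← spectrum.singleton_sub_eq] at h
    obtain ⟨r, rfl, μ, hμ, heq⟩ := h
    rw [← Matrix.spectrum_toLin', ← Module.End.hasEigenvalue_iff_mem_spectrum] at hμ
    simpa [← heq] using hρ μ hμ
  simpa [sub_mulVec, Algebra.algebraMap_eq_smul_one, smul_mulVec, dotProduct_sub] using
    hpsd.dotProduct_mulVec_nonneg v

namespace AdditiveSchwarz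

variable {R X ι : Type*} [Fintype ι]

def sumForm [CommSemiring R] [AddCommMonoid X] [Module R X] (Xk : ι → Submodule R X)
    (b : ι → LinearMap.BilinForm R X) : LinearMap.BilinForm R (Π k, Xk k) :=
  ∑ k, (b k).compl₁₂ ((Xk k).subtype ∘ₗ LinearMap.proj k) ((Xk k).subtype ∘ₗ LinearMap.proj k)

@[simp]
lemma sumForm_apply [CommSemiring R] [AddCommMonoid X] [Module R X] (Xk : ι → Submodule R X)
    (b : ι → LinearMap.BilinForm R X) (t u : Π k, Xk k) :
    sumForm Xk b t u = ∑ k, b k (t k) (u k) := by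
  simp [sumForm]

lemma sumForm_sq_le [CommRing R] [LinearOrder R] [IsStrictOrderedRing R]
    [AddCommGroup X] [Module R X] {Xk : ι → Submodule R X} {b : ι → LinearMap.BilinForm R X}
    (hb_nonneg : ∀ k, ∀ x ∈ Xk k, 0 ≤ b k x x)
    (hb_symm : ∀ k, ∀ x ∈ Xk k, ∀ y ∈ Xk k, b k x y = b k y x) (t u : Π k, Xk k) :
    sumForm Xk b t u ^ 2 ≤ sumForm Xk b t t * sumForm Xk b u u := by
  have hsymm : sumForm Xk b u t = sumForm Xk b t u := by
    simp only [sumForm_apply]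
    exact Finset.sum_congr rfl fun k _ => hb_symm k _ (u k).2 _ (t k).2
  rw [sq]
  nth_rewrite 2 [← hsymm]
  refine LinearMap.BilinForm.apply_mul_apply_le_of_forall_zero_le _ (fun s => ?_) t u
  simp only [sumForm_apply]
  exact Finset.sum_nonneg fun k _ => hb_nonneg k _ (s k).2

theorem pos_and_one_le_mul_of_stable_decomposition [Field R] [LinearOrder R]
    [IsStrictOrderedRing R] [AddCommGroup X] [Module R X] {a : LinearMap.BilinForm R X}
    {Xk : ι → Submodule R X} {b : ι → LinearMap.BilinForm R X}
    (hb_nonneg : ∀ k, ∀ x ∈ Xk k, 0 ≤ b k x x)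
    (hb_symm : ∀ k, ∀ x ∈ Xk k, ∀ y ∈ Xk k, b k x y = b k y x)
    {x : X} (hx : 0 < a x x) {μ : R} {t : ι → X} (ht_mem : ∀ k, t k ∈ Xk k)
    (ht : ∀ k, ∀ y ∈ Xk k, b k (t k) y = a x y) (ht_sum : ∑ k, t k = μ • x)
    {C₀ : R} {u : ι → X} (hu_mem : ∀ k, u k ∈ Xk k) (hu_sum : x = ∑ k, u k)
    (hu : ∑ k, b k (u k) (u k) ≤ C₀ * a x x) :
    0 < μ ∧ 1 ≤ C₀ * μ := by
  let t' : Π k, Xk k := fun k => ⟨t k, ht_mem k⟩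
  let u' : Π k, Xk k := fun k => ⟨u k, hu_mem k⟩
  have hsum (v : Π k, Xk k) : sumForm Xk b t' v = a x (∑ k, v k) := by
    rw [sumForm_apply, map_sum]
    exact Finset.sum_congr rfl fun k _ => ht k _ (v k).2
  have htt : sumForm Xk b t' t' = μ * a x x := by
    rw [hsum t', ht_sum, map_smul, smul_eq_mul]
  have htu : sumForm Xk b t' u' = a x x := by rw [hsum u', ← hu_sum]
  have hμ : 0 ≤ μ * a x x := by
    rw [← htt, sumForm_apply]
    exact Finset.sum_nonneg fun k _ => hb_nonneg k _ (ht_mem k)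
  have hcs : a x x * a x x ≤ μ * a x x * (C₀ * a x x) := by
    calc a x x * a x x = sumForm Xk b t' u' ^ 2 := by rw [htu, sq]
      _ ≤ sumForm Xk b t' t' * sumForm Xk b u' u' := sumForm_sq_le hb_nonneg hb_symm t' u'
      _ ≤ μ * a x x * (C₀ * a x x) := by rw [htt, sumForm_apply]; gcongr
  have hlow : 1 ≤ C₀ * μ :=
    le_of_mul_le_mul_right (by linarith) (mul_pos hx hx)
  refine ⟨lt_of_le_of_ne (nonneg_of_mul_nonneg_left hμ hx) ?_, hlow⟩
  rintro rfl
  rw [mul_zero] at hlow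
  linarith

theorem le_mul_of_local_stability [Field R] [LinearOrder R] [IsStrictOrderedRing R]
    [AddCommGroup X] [Module R X] {a : LinearMap.BilinForm R X} (ha : ∀ x, 0 ≤ a x x)
    {Xk : ι → Submodule R X} {b : ι → LinearMap.BilinForm R X}
    {x : X} (hx : 0 < a x x) {μ : R} (hμ : 0 < μ) {t : ι → X} (ht_mem : ∀ k, t k ∈ Xk k)
    (ht : ∀ k, ∀ y ∈ Xk k, b k (t k) y = a x y) (ht_sum : ∑ k, t k = μ • x)
    {ω ρ : R} (hω : ∀ k, ∀ y ∈ Xk k, a y y ≤ ω * b k y y)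
    (hρ : a (∑ k, t k) (∑ k, t k) ≤ ρ * ∑ k, a (t k) (t k)) :
    μ ≤ ω * ρ := by
  have hb : ∑ k, b k (t k) (t k) = μ * a x x := by
    rw [Finset.sum_congr rfl fun k _ => ht k _ (ht_mem k), ← map_sum, ht_sum, map_smul,
      smul_eq_mul]
  have hsum : a (∑ k, t k) (∑ k, t k) = μ * (μ * a x x) := by
    simp only [ht_sum, map_smul, LinearMap.smul_apply, smul_eq_mul]
  have ha_sum : ∑ k, a (t k) (t k) ≤ ω * (μ * a x x) := by
    rw [← hb, Finset.mul_sum]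
    exact Finset.sum_le_sum fun k _ => hω k _ (ht_mem k)
  rw [hsum] at hρ
  have hP : 0 < μ * a x x := mul_pos hμ hx
  have hρ_pos : 0 < ρ :=
    pos_of_mul_pos_left ((mul_pos hμ hP).trans_le hρ) (Finset.sum_nonneg fun k _ => ha (t k))
  refine le_of_mul_le_mul_right ?_ hP
  calc μ * (μ * a x x) ≤ ρ * ∑ k, a (t k) (t k) := hρ
    _ ≤ ρ * (ω * (μ * a x x)) := by gcongr
    _ = ω * ρ * (μ * a x x) := by ring

theorem apply_sum_le_of_strengthened_cauchy [AddCommGroup X] [Module ℝ X] [DecidableEq ι]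
    {a : LinearMap.BilinForm ℝ X} (ha : ∀ x, 0 ≤ a x x) {Xk : ι → Submodule ℝ X}
    {E : Matrix ι ι ℝ} (hE_symm : E.IsSymm) {ρ : ℝ}
    (hρ : ∀ μ, Module.End.HasEigenvalue (Matrix.toLin' E) μ → μ ≤ ρ)
    (hE : ∀ i j, ∀ x ∈ Xk i, ∀ y ∈ Xk j, a x y ≤ E i j * √(a x x) * √(a y y))
    {t : ι → X} (ht_mem : ∀ k, t k ∈ Xk k) :
    a (∑ k, t k) (∑ k, t k) ≤ ρ * ∑ k, a (t k) (t k) := by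
  set v : ι → ℝ := fun k => √(a (t k) (t k))
  calc a (∑ k, t k) (∑ k, t k) = ∑ i, ∑ j, a (t i) (t j) := by
        simp only [map_sum, LinearMap.sum_apply]
        exact Finset.sum_comm
    _ ≤ ∑ i, ∑ j, E i j * v i * v j := by
        gcongr with i _ j _
        exact hE i j _ (ht_mem i) _ (ht_mem j)
    _ = v ⬝ᵥ (E *ᵥ v) := by
        simp only [dotProduct, mulVec, Finset.mul_sum]
        exact Finset.sum_congr rfl fun i _ => Finset.sum_congr rfl fun j _ => by ring
    _ ≤ ρ * (v ⬝ᵥ v) := hE_symm.dotProduct_mulVec_le hρ v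
    _ = ρ * ∑ k, a (t k) (t k) := by simp only [dotProduct, v, Real.mul_self_sqrt (ha _)]

end AdditiveSchwarz

theorem additive_schwarz_condition_bound_general
    {X : Type*} [AddCommGroup X] [Module ℝ X]
    {M : ℕ}
    (a : X →ₗ[ℝ] X →ₗ[ℝ] ℝ)
    (hpd : ∀ x : X, x ≠ 0 → 0 < a x x)
    (Xk : Fin M → Submodule ℝ X)
    (b : Fin M → (X →ₗ[ℝ] X →ₗ[ℝ] ℝ))
    (hbsymm : ∀ k, ∀ x ∈ Xk k, ∀ y ∈ Xk k, b k x y = b k y x)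
    (hbpd : ∀ k, ∀ x ∈ Xk k, x ≠ 0 → 0 < b k x x)
    (A : X →ₗ[ℝ] Module.Dual ℝ X) (hA : ∀ x y : X, A x y = a x y)
    (B : Module.Dual ℝ X →ₗ[ℝ] X)
    (usol : Module.Dual ℝ X → Fin M → X)
    (husol_mem : ∀ r k, usol r k ∈ Xk k)
    (husol_eq : ∀ r k, ∀ y ∈ Xk k, b k (usol r k) y = r y)
    (hB : ∀ r, B r = ∑ k, usol r k)
    (C₀ ω ρ : ℝ)
    (hC₀ : ∀ x : X, ∃ u : Fin M → X, (∀ k, u k ∈ Xk k) ∧ x = ∑ k, u k ∧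
      ∑ k, b k (u k) (u k) ≤ C₀ * a x x)
    (hω : ∀ k, ∀ x ∈ Xk k, a x x ≤ ω * b k x x)
    (E : Matrix (Fin M) (Fin M) ℝ) (hEsymm : E.IsSymm)
    (hE : ∀ i j, ∀ x ∈ Xk i, ∀ y ∈ Xk j,
      a x y ≤ E i j * Real.sqrt (a x x) * Real.sqrt (a y y))
    (hρ : ∀ μ : ℝ, Module.End.HasEigenvalue (Matrix.toLin' E) μ → |μ| ≤ ρ) :
    (∀ μ : ℝ, Module.End.HasEigenvalue (B ∘ₗ A : Module.End ℝ X) μ → 0 < μ) ∧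
    (∀ μ ν : ℝ, Module.End.HasEigenvalue (B ∘ₗ A : Module.End ℝ X) μ →
      Module.End.HasEigenvalue (B ∘ₗ A : Module.End ℝ X) ν →
        μ ≤ C₀ * ω * ρ * ν) := by
  have ha : ∀ x, 0 ≤ a x x := fun x => by
    rcases eq_or_ne x 0 with rfl | hx
    exacts [by simp, (hpd x hx).le]
  have hb : ∀ k, ∀ x ∈ Xk k, 0 ≤ b k x x := fun k x hx => by
    rcases eq_or_ne x 0 with rfl | hx0
    exacts [by simp, (hbpd k x hx hx0).le]
  have bounds : ∀ μ, Module.End.HasEigenvalue (B ∘ₗ A) μ →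
      0 < μ ∧ 1 ≤ C₀ * μ ∧ μ ≤ ω * ρ := by
    intro μ hμ
    obtain ⟨x, hx⟩ := hμ.exists_hasEigenvector
    have hx_pos : 0 < a x x := hpd x hx.2
    have ht : ∀ k, ∀ y ∈ Xk k, b k (usol (A x) k) y = a x y := fun k y hy =>
      (husol_eq _ k y hy).trans (hA x y)
    have ht_sum : ∑ k, usol (A x) k = μ • x := (hB _).symm.trans hx.apply_eq_smul
    obtain ⟨u, hu_mem, hu_sum, hu⟩ := hC₀ x
    obtain ⟨hμ_pos, hμ_low⟩ :=
      AdditiveSchwarz.pos_and_one_le_mul_of_stable_decomposition hb hbsymm hx_pos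
        (husol_mem _) ht ht_sum hu_mem hu_sum hu
    have hcauchy := AdditiveSchwarz.apply_sum_le_of_strengthened_cauchy ha hEsymm
      (fun μ h => le_of_abs_le (hρ μ h)) hE (husol_mem (A x))
    exact ⟨hμ_pos, hμ_low, AdditiveSchwarz.le_mul_of_local_stability ha hx_pos hμ_pos
      (husol_mem _) ht ht_sum hω hcauchy⟩
  refine ⟨fun μ hμ => (bounds μ hμ).1, fun μ ν hμ hν => ?_⟩
  obtain ⟨hμ_pos, -, hμ_up⟩ := bounds μ hμ
  obtain ⟨-, hν_low, -⟩ := bounds ν hν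
  calc μ ≤ ω * ρ * 1 := by rwa [mul_one]
    _ ≤ ω * ρ * (C₀ * ν) := mul_le_mul_of_nonneg_left hν_low (hμ_pos.le.trans hμ_up)
    _ = C₀ * ω * ρ * ν := by ring

/-- Abstract additive Schwarz bound of Dryja–Widlund: under the stable
decomposition (i), local stability (ii) and strengthened Cauchy inequalities
(iii), all eigenvalues of the preconditioned operator `B ∘ A` are positive and
`λ_max/λ_min ≤ C₀ · ω · ρ(E)`. -/
theorem additive_schwarz_condition_bound
    {X : Type*} [AddCommGroup X] [Module ℝ X] [FiniteDimensional ℝ X]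
    {M : ℕ}
    (a : X →ₗ[ℝ] X →ₗ[ℝ] ℝ)
    (hsymm : ∀ u v : X, a u v = a v u)
    (hpd : ∀ x : X, x ≠ 0 → 0 < a x x)
    (Xk : Fin M → Submodule ℝ X)
    (hspan : (⨆ k, Xk k) = ⊤)
    (b : Fin M → (X →ₗ[ℝ] X →ₗ[ℝ] ℝ))
    (hbsymm : ∀ k, ∀ x ∈ Xk k, ∀ y ∈ Xk k, b k x y = b k y x)
    (hbpd : ∀ k, ∀ x ∈ Xk k, x ≠ 0 → 0 < b k x x)
    (A : X →ₗ[ℝ] Module.Dual ℝ X) (hA : ∀ x y : X, A x y = a x y)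
    (B : Module.Dual ℝ X →ₗ[ℝ] X)
    (usol : Module.Dual ℝ X → Fin M → X)
    (husol_mem : ∀ r k, usol r k ∈ Xk k)
    (husol_eq : ∀ r k, ∀ y ∈ Xk k, b k (usol r k) y = r y)
    (hB : ∀ r, B r = ∑ k, usol r k)
    (C₀ ω ρ : ℝ)
    (hC₀ : ∀ x : X, ∃ u : Fin M → X, (∀ k, u k ∈ Xk k) ∧ x = ∑ k, u k ∧
      ∑ k, b k (u k) (u k) ≤ C₀ * a x x)
    (hω : ∀ k, ∀ x ∈ Xk k, a x x ≤ ω * b k x x)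
    (E : Matrix (Fin M) (Fin M) ℝ) (hEsymm : E.IsSymm)
    (hE : ∀ i j, ∀ x ∈ Xk i, ∀ y ∈ Xk j,
      a x y ≤ E i j * Real.sqrt (a x x) * Real.sqrt (a y y))
    (hρ : ∀ μ : ℝ, Module.End.HasEigenvalue (Matrix.toLin' E) μ → |μ| ≤ ρ) :
    (∀ μ : ℝ, Module.End.HasEigenvalue (B ∘ₗ A : Module.End ℝ X) μ → 0 < μ) ∧
    (∀ μ ν : ℝ, Module.End.HasEigenvalue (B ∘ₗ A : Module.End ℝ X) μ →
      Module.End.HasEigenvalue (B ∘ₗ A : Module.End ℝ X) ν →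
        μ ≤ C₀ * ω * ρ * ν) :=
  additive_schwarz_condition_bound_general a hpd Xk b hbsymm hbpd A hA B usol husol_mem husol_eq hB
    C₀ ω ρ hC₀ hω E hEsymm hE hρ
end

section
/- Multispace BDDC bound (special case M = 1): Let W be a finite-dimensional real vector space with symmetric positive semidefinite bilinear form a, X ⊆ V ⊆ W subspaces with a positive definite on V, and Q : V → X a projection (Q surjective onto X with Q|_X = I). Define B : X' → X by Br = Qv where v ∈ V solves a(v, z) = ⟨r, Qz⟩ for all z ∈ V. Then B is SPD on X' and the condition number of BA_X satisfies κ ≤ ω := sup_{v ∈ V, v≠0} ‖Qv‖_a²/‖v‖_a², where A_X is the operator of a on X. -/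
/-- Multispace BDDC bound in the case `M = 1`: the preconditioner
`B : r ↦ Q v`, where `v ∈ V` solves `a(v, z) = ⟨r, Qz⟩` for all `z ∈ V`, is
SPD on `X'` and the condition number of `B ∘ A_X` satisfies `κ ≤ ω`, where
`ω` bounds `‖Qv‖_a²/‖v‖_a²` on `V`. -/
theorem multispace_bddc_single_space_bound
    {W : Type*} [AddCommGroup W] [Module ℝ W] [FiniteDimensional ℝ W]
    (a : W →ₗ[ℝ] W →ₗ[ℝ] ℝ)
    (hsymm : ∀ u v : W, a u v = a v u)
    (hpsd : ∀ w : W, 0 ≤ a w w)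
    (X V : Submodule ℝ W) (hXV : X ≤ V)
    (hpdV : ∀ v ∈ V, v ≠ 0 → 0 < a v v)
    (Q : W →ₗ[ℝ] W)
    (hQmem : ∀ v ∈ V, Q v ∈ X)
    (hQid : ∀ x ∈ X, Q x = x)
    (AX : ↥X →ₗ[ℝ] Module.Dual ℝ ↥X)
    (hAX : ∀ x y : ↥X, AX x y = a (x : W) (y : W))
    (B : Module.Dual ℝ ↥X →ₗ[ℝ] ↥X)
    (vsol : Module.Dual ℝ ↥X → W)
    (hvmem : ∀ r, vsol r ∈ V)
    (hveq : ∀ r, ∀ z : W, ∀ hz : z ∈ V, a (vsol r) z = r ⟨Q z, hQmem z hz⟩)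
    (hB : ∀ r, (B r : W) = Q (vsol r))
    (ω : ℝ)
    (hω : ∀ v ∈ V, a (Q v) (Q v) ≤ ω * a v v) :
    (∀ r s : Module.Dual ℝ ↥X, r (B s) = s (B r)) ∧
    (∀ r : Module.Dual ℝ ↥X, r ≠ 0 → 0 < r (B r)) ∧
    (∀ μ ν : ℝ, Module.End.HasEigenvalue (B ∘ₗ AX : Module.End ℝ ↥X) μ →
      Module.End.HasEigenvalue (B ∘ₗ AX : Module.End ℝ ↥X) ν → μ ≤ ω * ν) := by
  have key : ∀ r s : Module.Dual ℝ ↥X, r (B s) = a (vsol r) (vsol s) := by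
    intro r s
    have h := hveq r (vsol s) (hvmem s)
    have hx : (⟨Q (vsol s), hQmem _ (hvmem s)⟩ : ↥X) = B s := Subtype.ext (hB s).symm
    rw [hx] at h
    exact h.symm
  refine ⟨?_, ?_, ?_⟩
  · intro r s
    rw [key, key, hsymm]
  · intro r hr
    rw [key]
    refine hpdV _ (hvmem r) ?_
    intro h0
    apply hr
    ext x
    have h := hveq r (x : W) (hXV x.2)
    rw [h0] at h
    have hx : (⟨Q (x : W), hQmem _ (hXV x.2)⟩ : ↥X) = x := Subtype.ext (hQid _ x.2)
    rw [hx] at h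
    simpa using h.symm
  · have eig : ∀ lam : ℝ, Module.End.HasEigenvalue (B ∘ₗ AX : Module.End ℝ ↥X) lam →
        1 ≤ lam ∧ lam ≤ ω := by
      intro lam hl
      obtain ⟨x, hx⟩ := hl.exists_hasEigenvector
      have hxne : x ≠ 0 := hx.2
      have hxW : (x : W) ≠ 0 := fun h => hxne (Subtype.ext h)
      have hxV : (x : W) ∈ V := hXV x.2
      have haxx : 0 < a (x : W) (x : W) := hpdV _ hxV hxW
      set r := AX x with hr
      set v := vsol r with hv
      have hBr : B r = lam • x := hx.apply_eq_smul
      have hQv : Q v = lam • (x : W) := by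
        rw [← hB r, hBr]; rfl
      have hrx : r x = a (x : W) (x : W) := hAX x x
      have hvv : a v v = lam * a (x : W) (x : W) := by
        have h1 : r (B r) = a v v := key r r
        rw [hBr, map_smul] at h1
        rw [← h1]
        simp [hrx, smul_eq_mul]
      have hvx : a v (x : W) = a (x : W) (x : W) := by
        have h := hveq r (x : W) hxV
        have hx2 : (⟨Q (x : W), hQmem _ hxV⟩ : ↥X) = x := Subtype.ext (hQid _ x.2)
        rw [hx2, hrx] at h
        exact h
      have hlow : 1 ≤ lam := by
        have hsub := hpsd (v - (x : W))
        have hxv : a (x : W) v = a v (x : W) := hsymm _ _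
        simp only [map_sub, LinearMap.sub_apply] at hsub
        nlinarith
      refine ⟨hlow, ?_⟩
      have hup := hω v (hvmem r)
      rw [hQv] at hup
      simp only [map_smul, LinearMap.smul_apply, smul_eq_mul] at hup
      rw [hvv] at hup
      nlinarith [mul_pos (show (0:ℝ) < lam by linarith) haxx]
    intro μ ν hμ hν
    obtain ⟨hμ1, hμω⟩ := eig μ hμ
    obtain ⟨hν1, _⟩ := eig ν hν
    nlinarith
end

section
/- Under the hypotheses of the orthogonal Multispace BDDC setting (V_k pairwise a-orthogonal, a positive definite on each V_k, X ⊆ ⊕V_k, Q_k : V_k → X projections with the decomposition-of-unity property), if v_k denotes the a-orthogonal projection of u ∈ X onto V_k, then u = Σ_k Q_k v_k and Σ_k ‖v_k‖_a² = ‖u‖_a². In particular the stable-decomposition constant C₀ equals 1. -/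
/-- Stable decomposition with constant `C₀ = 1` in the orthogonal Multispace
BDDC setting: if `v k` is the `a`-orthogonal projection of `u ∈ X` onto `V_k`,
then `u = Σ Q_k v_k` and `Σ ‖v_k‖_a² = ‖u‖_a²`. -/
theorem multispace_bddc_stable_decomposition
    {W : Type*} [AddCommGroup W] [Module ℝ W] [FiniteDimensional ℝ W]
    {M : ℕ}
    (a : W →ₗ[ℝ] W →ₗ[ℝ] ℝ)
    (hsymm : ∀ u v : W, a u v = a v u)
    (hpsd : ∀ w : W, 0 ≤ a w w)
    (Vk : Fin M → Submodule ℝ W)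
    (horth : ∀ i j, i ≠ j → ∀ vi ∈ Vk i, ∀ vj ∈ Vk j, a vi vj = 0)
    (hpd : ∀ k, ∀ v ∈ Vk k, v ≠ 0 → 0 < a v v)
    (X : Submodule ℝ W) (hX : X ≤ ⨆ k, Vk k)
    (Q : Fin M → (W →ₗ[ℝ] W))
    (hQmem : ∀ k, ∀ v ∈ Vk k, Q k v ∈ X)
    (hdec : ∀ u ∈ X, ∀ v : Fin M → W, (∀ k, v k ∈ Vk k) →
      u = ∑ k, v k → u = ∑ k, Q k (v k))
    (u : W) (hu : u ∈ X)
    (v : Fin M → W)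
    (hvmem : ∀ k, v k ∈ Vk k)
    (hvproj : ∀ k, ∀ z ∈ Vk k, a (u - v k) z = 0) :
    u = ∑ k, Q k (v k) ∧ ∑ k, a (v k) (v k) = a u u := by
  -- decompose u over the V_k
  obtain ⟨f, hf, hsum⟩ := (Submodule.mem_iSup_iff_exists_finsupp _ _).mp (hX hu)
  rw [Finsupp.sum_fintype _ _ (fun i => rfl)] at hsum
  -- u = ∑ v k
  have hkey : ∀ k, v k = f k := by
    intro k
    have hmemd : v k - f k ∈ Vk k := Submodule.sub_mem _ (hvmem k) (hf k)
    have hufz : ∀ z ∈ Vk k, a (u - f k) z = 0 := by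
      intro z hz
      have : a u z = ∑ j, a (f j) z := by
        rw [← hsum]; simp [map_sum]
      have hdiag : ∀ j ∈ Finset.univ, j ≠ k → a (f j) z = 0 := by
        intro j _ hj; exact horth j k hj _ (hf j) z hz
      rw [Finset.sum_eq_single_of_mem k (Finset.mem_univ k) hdiag] at this
      simp [this]
    have h0 : a (v k - f k) (v k - f k) = 0 := by
      have h1 := hvproj k _ hmemd
      have h2 := hufz _ hmemd
      have heq : u - f k - (u - v k) = v k - f k := by abel
      have : a (v k - f k) (v k - f k) = a (u - f k) (v k - f k) - a (u - v k) (v k - f k) := by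
        rw [← LinearMap.sub_apply, ← map_sub, heq]
      rw [this, h1, h2, sub_zero]
    by_contra hne
    have hd : v k - f k ≠ 0 := sub_ne_zero.mpr hne
    exact absurd h0 (ne_of_gt (hpd k _ hmemd hd))
  have husum : u = ∑ k, v k := by
    rw [← hsum]; exact Finset.sum_congr rfl fun k _ => (hkey k).symm
  refine ⟨hdec u hu v hvmem husum, ?_⟩
  conv_rhs => rw [husum]
  rw [show (a (∑ k, v k)) (∑ k, v k) = ∑ k, ∑ j, a (v k) (v j) by
    simp only [map_sum, LinearMap.sum_apply]
    exact Finset.sum_comm]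
  rw [Finset.sum_comm]
  refine Finset.sum_congr rfl fun k _ => ?_
  rw [Finset.sum_eq_single_of_mem k (Finset.mem_univ k)]
  intro j _ hj
  exact horth j k hj _ (hvmem j) _ (hvmem k)
end

section
/- Positivity of the Multispace BDDC preconditioner: Under the hypotheses of the orthogonal Multispace BDDC corollary (V_k pairwise a-orthogonal, a positive definite on each V_k, Q_k : V_k → X projections satisfying decomposition of unity, a positive definite on X), the preconditioner B : X' → X defined by Br = Σ_k Q_k v_k with v_k ∈ V_k solving a(v_k, z_k) = ⟨r, Q_k z_k⟩ for all z_k ∈ V_k, satisfies: the bilinear form (r, s) ↦ ⟨r, Bs⟩ on X' is symmetric and positive semidefinite, and it is positive definite provided the maps r ↦ (⟨r, Q_k·⟩)_k jointly separate points of X' (equivalently, Σ Q_k V_k = X). -/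
/-- Positivity of the Multispace BDDC preconditioner: the bilinear form
`(r, s) ↦ ⟨r, B s⟩` is symmetric and positive semidefinite, and positive
definite provided `Σ_k Q_k V_k = X`. -/
theorem multispace_bddc_preconditioner_positive
    {W : Type*} [AddCommGroup W] [Module ℝ W] [FiniteDimensional ℝ W]
    {M : ℕ}
    (a : W →ₗ[ℝ] W →ₗ[ℝ] ℝ)
    (hsymm : ∀ u v : W, a u v = a v u)
    (hpsd : ∀ w : W, 0 ≤ a w w)
    (Vk : Fin M → Submodule ℝ W)
    (horth : ∀ i j, i ≠ j → ∀ vi ∈ Vk i, ∀ vj ∈ Vk j, a vi vj = 0)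
    (hpd : ∀ k, ∀ v ∈ Vk k, v ≠ 0 → 0 < a v v)
    (X : Submodule ℝ W) (hX : X ≤ ⨆ k, Vk k)
    (hpdX : ∀ x ∈ X, x ≠ 0 → 0 < a x x)
    (Q : Fin M → (W →ₗ[ℝ] W))
    (hQmem : ∀ k, ∀ v ∈ Vk k, Q k v ∈ X)
    (hdec : ∀ u ∈ X, ∀ v : Fin M → W, (∀ k, v k ∈ Vk k) →
      u = ∑ k, v k → u = ∑ k, Q k (v k))
    (B : Module.Dual ℝ ↥X →ₗ[ℝ] ↥X)
    (vsol : Module.Dual ℝ ↥X → Fin M → W)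
    (hvmem : ∀ r k, vsol r k ∈ Vk k)
    (hveq : ∀ r k, ∀ z : W, ∀ hz : z ∈ Vk k,
      a (vsol r k) z = r ⟨Q k z, hQmem k z hz⟩)
    (hB : ∀ r, (B r : W) = ∑ k, Q k (vsol r k)) :
    (∀ r s : Module.Dual ℝ ↥X, r (B s) = s (B r)) ∧
    (∀ r : Module.Dual ℝ ↥X, 0 ≤ r (B r)) ∧
    ((∀ x : ↥X, ∃ v : Fin M → W, (∀ k, v k ∈ Vk k) ∧
        (x : W) = ∑ k, Q k (v k)) →
      ∀ r : Module.Dual ℝ ↥X, r ≠ 0 → 0 < r (B r)) := by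

  have key : ∀ r s : Module.Dual ℝ ↥X, r (B s) = ∑ k, a (vsol r k) (vsol s k) := by
    intro r s
    have h1 : B s = ∑ k, (⟨Q k (vsol s k), hQmem k _ (hvmem s k)⟩ : ↥X) := by
      apply Subtype.ext
      rw [hB]
      simp
    rw [h1, map_sum]
    exact Finset.sum_congr rfl fun k _ => (hveq r k _ (hvmem s k)).symm
  refine ⟨?_, ?_, ?_⟩
  · intro r s
    rw [key r s, key s r]
    exact Finset.sum_congr rfl fun k _ => hsymm _ _
  · intro r
    rw [key r r]
    exact Finset.sum_nonneg fun k _ => hpsd _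
  · intro hgen r hr
    rcases lt_or_eq_of_le ((key r r) ▸ Finset.sum_nonneg fun k _ => hpsd (vsol r k) :
        (0:ℝ) ≤ r (B r)) with h | h
    · exact h
    exfalso
    have hz : ∀ k, vsol r k = 0 := by
      have hsum : ∑ k, a (vsol r k) (vsol r k) = 0 := by rw [← key r r, ← h]
      intro k
      by_contra hk
      have := hpd k _ (hvmem r k) hk
      have hle : a (vsol r k) (vsol r k) ≤ ∑ j, a (vsol r j) (vsol r j) :=
        Finset.single_le_sum (fun j _ => hpsd (vsol r j)) (Finset.mem_univ k)
      linarith [hsum ▸ hle]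
    apply hr
    ext x
    obtain ⟨v, hv, hx⟩ := hgen x
    have hx' : x = ∑ k, (⟨Q k (v k), hQmem k _ (hv k)⟩ : ↥X) := by
      apply Subtype.ext
      rw [hx]
      simp
    rw [hx', map_sum]
    simp only [LinearMap.zero_apply]
    apply Finset.sum_eq_zero
    intro k _
    rw [← hveq r k _ (hv k), hz k]
    simp
end
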